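/- arXiv:math/0702437 — 5 statements merged into one kernel-verified Lean document; each statement's English description precedes it below -/
import Mathlib

section
/- Inverse function theorem with continuous parameters: Let n, l be natural numbers, U ⊆ ℝⁿ and V ⊆ ℝˡ open sets, and f : ℝⁿ × ℝˡ → ℝⁿ a continuous function on U × V such that (i) for every fixed t ∈ V the map x ↦ f(x,t) is C^∞ on U, and (ii) for every k ∈ ℕ the map (x,t) ↦ iteratedFDeriv ℝ k (fun x => f(x,t)) x is continuous on U × V. Suppose that at a point (x₀,t₀) ∈ U × V the (Fréchet) derivative of x ↦ f(x,t₀) at x₀ is an invertible linear map. Define F(x,t) = (f(x,t), t). Then there is an open neighborhood A ⊆ U × V of (x₀,t₀) such that F(A) is open in ℝⁿ × ℝˡ and F restricts to a homeomorphism from A onto F(A); moreover, writing the inverse as (y,t) ↦ (g(y,t), t), for each fixed t the map y ↦ g(y,t) is C^∞, and g together with all its iterated derivatives with respect to the y variables are continuous in (y,t). -/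
open Set Metric NNReal
set_option maxHeartbeats 1000000

/-- Joint continuity of the Taylor composition coefficient. -/
theorem continuousOn_taylorComp_aux
    {α : Type*} [TopologicalSpace α] {E F G : Type*}
    [NormedAddCommGroup E] [NormedSpace ℝ E] [NormedAddCommGroup F] [NormedSpace ℝ F]
    [NormedAddCommGroup G] [NormedSpace ℝ G]
    {s : Set α} (q : α → FormalMultilinearSeries ℝ F G)
    (p : α → FormalMultilinearSeries ℝ E F) (k : ℕ)
    (hq : ∀ m, m ≤ k → ContinuousOn (fun x => q x m) s)
    (hp : ∀ m, m ≤ k → ContinuousOn (fun x => p x m) s) :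
    ContinuousOn (fun x => (q x).taylorComp (p x) k) s := by
  apply continuousOn_finset_sum
  intro c _
  let B := c.compAlongOrderedFinpartitionL ℝ E F G
  have hB : Continuous (fun z :
      (ContinuousMultilinearMap ℝ (fun _ : Fin c.length => F) G) ×
      (∀ i : Fin c.length, ContinuousMultilinearMap ℝ (fun _ : Fin (c.partSize i) => E) F) =>
      B z.1 z.2) := by
    rw [← continuousOn_univ]
    exact B.analyticOnNhd_uncurry_of_multilinear.continuousOn
  exact hB.comp_continuousOn
    ((hq _ c.length_le).prodMk (continuousOn_pi.2 fun i => hp _ (c.partSize_le i)))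



theorem param_ift_aux_nontrivial
    {E T : Type*} [NormedAddCommGroup E] [NormedSpace ℝ E] [CompleteSpace E]
    [NormedAddCommGroup T]
    (U : Set E) (V : Set T) (hU : IsOpen U) (hV : IsOpen V)
    (f : E × T → E)
    (hE : Nontrivial E) (hf_cont : ContinuousOn f (U ×ˢ V))
    (hf_smooth : ∀ t ∈ V, ContDiffOn ℝ (⊤ : ℕ∞) (fun x => f (x, t)) U)
    (hf_derivs : ∀ k : ℕ, ContinuousOn
      (fun p : E × T => iteratedFDeriv ℝ k (fun x => f (x, p.2)) p.1) (U ×ˢ V))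
    (x₀ : E) (t₀ : T) (hx₀ : x₀ ∈ U) (ht₀ : t₀ ∈ V)
    (hinv : ∃ e : E ≃L[ℝ] E, (e : E →L[ℝ] E) = fderiv ℝ (fun x => f (x, t₀)) x₀) :
    ∃ (A : Set (E × T)) (g : E × T → E),
      IsOpen A ∧ (x₀, t₀) ∈ A ∧ A ⊆ U ×ˢ V ∧
      IsOpen ((fun p => (f p, p.2)) '' A) ∧
      (∀ p ∈ A, g (f p, p.2) = p.1) ∧
      (∀ q ∈ (fun p => (f p, p.2)) '' A, (g q, q.2) ∈ A ∧ f (g q, q.2) = q.1) ∧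
      ContinuousOn (fun q => ((g q, q.2) : E × T)) ((fun p => (f p, p.2)) '' A) ∧
      (∀ t : T, ContDiffOn ℝ (⊤ : ℕ∞) (fun y => g (y, t))
        {y | (y, t) ∈ (fun p => (f p, p.2)) '' A}) ∧
      (∀ k : ℕ, ContinuousOn
        (fun q : E × T => iteratedFDeriv ℝ k (fun y => g (y, q.2)) q.1)
        ((fun p => (f p, p.2)) '' A)) := by
  classical
  obtain ⟨e, he⟩ := hinv
  set N := ‖(e.symm : E →L[ℝ] E)‖₊ with hNdef
  have hN : 0 < N := by
    rcases exists_ne (0 : E) with ⟨x, hx⟩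
    rw [pos_iff_ne_zero]
    intro h
    rw [hNdef, nnnorm_eq_zero] at h
    apply hx
    have : e.symm (e x) = 0 := by
      rw [show e.symm (e x) = (e.symm : E →L[ℝ] E) (e x) from rfl, h]; rfl
    simpa using this
  set c : ℝ≥0 := N⁻¹ / 2 with hcdef
  have hcpos : (0 : ℝ) < c := by
    have : (0 : ℝ≥0) < c := by positivity
    exact_mod_cast this
  have hcN : c < N⁻¹ := NNReal.half_lt_self (by positivity)
  have hc' : Subsingleton E ∨ c < N⁻¹ := Or.inr hcN
  -- joint continuity of the first derivative
  have hfder : ∀ p : E × T, fderiv ℝ (fun x => f (x, p.2)) p.1 =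
      continuousMultilinearCurryFin1 ℝ E E (iteratedFDeriv ℝ 1 (fun x => f (x, p.2)) p.1) := by
    intro p; ext v
    simp [iteratedFDeriv_one_apply]
  have hDfcont : ContinuousOn (fun p : E × T => fderiv ℝ (fun x => f (x, p.2)) p.1)
      (U ×ˢ V) := by
    have := hf_derivs 1
    refine ContinuousOn.congr ?_ (fun p _ => hfder p)
    exact (continuousMultilinearCurryFin1 ℝ E E).continuous.comp_continuousOn this
  -- radius
  obtain ⟨r₀, hr₀pos, hr₀U⟩ : ∃ r > 0, closedBall x₀ r ⊆ U :=
    (Metric.nhds_basis_closedBall.mem_iff).1 (hU.mem_nhds hx₀)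
  obtain ⟨r₁, hr₁pos, hr₁V⟩ : ∃ r > 0, closedBall t₀ r ⊆ V :=
    (Metric.nhds_basis_closedBall.mem_iff).1 (hV.mem_nhds ht₀)
  have hDfc : ContinuousAt (fun p : E × T => fderiv ℝ (fun x => f (x, p.2)) p.1) (x₀, t₀) :=
    hDfcont.continuousAt (IsOpen.mem_nhds (hU.prod hV) ⟨hx₀, ht₀⟩)
  obtain ⟨δ, hδpos, hδ⟩ := Metric.continuousAt_iff.1 hDfc (c : ℝ) hcpos
  set r : ℝ := min (min r₀ r₁) (δ / 2) with hrdef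
  have hrpos : 0 < r := lt_min (lt_min hr₀pos hr₁pos) (by linarith)
  have hUr : closedBall x₀ r ⊆ U :=
    (closedBall_subset_closedBall (le_trans (min_le_left _ _) (min_le_left _ _))).trans hr₀U
  have hVr : closedBall t₀ r ⊆ V :=
    (closedBall_subset_closedBall (le_trans (min_le_left _ _) (min_le_right _ _))).trans hr₁V
  have hDfr : ∀ x ∈ closedBall x₀ r, ∀ t ∈ closedBall t₀ r,
      ‖fderiv ℝ (fun x' => f (x', t)) x - (e : E →L[ℝ] E)‖ ≤ (c : ℝ) := by
    intro x hx t ht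
    have hd : dist ((x, t) : E × T) (x₀, t₀) < δ := by
      rw [Prod.dist_eq]
      have h1 : dist x x₀ ≤ r := mem_closedBall.1 hx
      have h2 : dist t t₀ ≤ r := mem_closedBall.1 ht
      have : r < δ := lt_of_le_of_lt (min_le_right _ _) (by linarith)
      exact max_lt (lt_of_le_of_lt h1 this) (lt_of_le_of_lt h2 this)
    have := hδ hd
    rw [dist_eq_norm] at this
    rw [← he] at this
    exact le_of_lt this
  -- the modified family and its linear approximation property
  set fT : T → E → E := fun t => if t ∈ closedBall t₀ r then (fun x => f (x, t)) else ⇑e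
    with hfTdef
  have hfTeq : ∀ t ∈ closedBall t₀ r, fT t = fun x => f (x, t) := by
    intro t ht; rw [hfTdef]; simp [ht]
  have hdiffat : ∀ t ∈ closedBall t₀ r, ∀ x ∈ closedBall x₀ r,
      DifferentiableAt ℝ (fun x' => f (x', t)) x := by
    intro t ht x hx
    exact ((hf_smooth t (hVr ht)).contDiffAt (hU.mem_nhds (hUr hx))).differentiableAt (by simp)
  have happrox : ∀ t, ApproximatesLinearOn (fT t) (e : E →L[ℝ] E) (ball x₀ r) c := by
    intro t
    by_cases ht : t ∈ closedBall t₀ r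
    · rw [hfTeq t ht]
      intro x hx y hy
      have hdiff : DifferentiableOn ℝ (fun x' => f (x', t) - e x') (ball x₀ r) := by
        intro z hz
        exact ((hdiffat t ht z (ball_subset_closedBall hz)).sub
          (e.differentiable.differentiableAt)).differentiableWithinAt
      have hbound : ∀ z ∈ ball x₀ r,
          ‖fderivWithin ℝ (fun x' => f (x', t) - e x') (ball x₀ r) z‖ ≤ (c : ℝ) := by
        intro z hz
        rw [fderivWithin_of_isOpen isOpen_ball hz,
          fderiv_fun_sub (hdiffat t ht z (ball_subset_closedBall hz)) e.differentiable.differentiableAt,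
          e.fderiv]
        exact hDfr z (ball_subset_closedBall hz) t ht
      have := (convex_ball x₀ r).norm_image_sub_le_of_norm_fderivWithin_le hdiff hbound hy hx
      calc ‖f (x, t) - f (y, t) - (e : E →L[ℝ] E) (x - y)‖
          = ‖(f (x, t) - e x) - (f (y, t) - e y)‖ := by
            rw [show (e : E →L[ℝ] E) (x - y) = e x - e y from map_sub e x y]
            congr 1
            abel
        _ ≤ (c : ℝ) * ‖x - y‖ := this
    · rw [hfTdef]
      simp only [if_neg ht]
      intro x hx y hy
      have : e x - e y - (e : E →L[ℝ] E) (x - y) = 0 := by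
        rw [show (e : E →L[ℝ] E) (x - y) = e x - e y from map_sub e x y]; abel
      rw [this, norm_zero]
      positivity
  -- the local homeomorphisms and the inverse function
  set P : T → OpenPartialHomeomorph E E :=
    fun t => (happrox t).toOpenPartialHomeomorph (fT t) (ball x₀ r) hc' isOpen_ball with hPdef
  have hPcoe : ∀ t, ⇑(P t) = fT t := fun t => rfl
  have hPsource : ∀ t, (P t).source = ball x₀ r := fun t => rfl
  have hPtarget : ∀ t, (P t).target = fT t '' ball x₀ r := fun t => rfl
  set g : E × T → E := fun q => (P q.2).symm q.1 with hgdef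
  set A : Set (E × T) := ball x₀ r ×ˢ ball t₀ r with hAdef
  set S : Set (E × T) := (fun p : E × T => (f p, p.2)) '' A with hSdef
  have hAopen : IsOpen A := isOpen_ball.prod isOpen_ball
  have hAmem : (x₀, t₀) ∈ A := ⟨mem_ball_self hrpos, mem_ball_self hrpos⟩
  have hAsub : A ⊆ U ×ˢ V := prod_mono (ball_subset_closedBall.trans hUr)
    (ball_subset_closedBall.trans hVr)
  -- membership characterization of S
  have hmemS : ∀ y t, ((y, t) ∈ S ↔ t ∈ ball t₀ r ∧ y ∈ (P t).target) := by
    intro y t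
    constructor
    · rintro ⟨⟨x, t'⟩, ⟨hx, ht'⟩, h⟩
      have h2 : t' = t := congrArg Prod.snd h
      have h1 : f (x, t') = y := congrArg Prod.fst h
      subst h2
      refine ⟨ht', ?_⟩
      rw [hPtarget]
      exact ⟨x, hx, by rw [hfTeq t' (ball_subset_closedBall ht')]; exact h1⟩
    · rintro ⟨ht, hy⟩
      rw [hPtarget] at hy
      obtain ⟨x, hx, hfx⟩ := hy
      refine ⟨(x, t), ⟨hx, ht⟩, ?_⟩
      rw [hfTeq t (ball_subset_closedBall ht)] at hfx
      simp only [Prod.mk.injEq]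
      exact ⟨hfx, trivial⟩
  -- left inverse
  have hgf : ∀ p ∈ A, g (f p, p.2) = p.1 := by
    rintro ⟨x, t⟩ ⟨hx, ht⟩
    have hfx : f (x, t) = fT t x := by rw [hfTeq t (ball_subset_closedBall ht)]
    show (P t).symm (f (x, t)) = x
    rw [hfx]
    exact (P t).left_inv (by rw [hPsource]; exact hx)
  -- right inverse
  have hfg : ∀ q ∈ S, (g q, q.2) ∈ A ∧ f (g q, q.2) = q.1 := by
    rintro ⟨y, t⟩ hq
    obtain ⟨ht, hy⟩ := (hmemS y t).1 hq
    have hgmem : (P t).symm y ∈ ball x₀ r := by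
      rw [← hPsource t]; exact (P t).map_target hy
    refine ⟨⟨hgmem, ht⟩, ?_⟩
    show f ((P t).symm y, t) = y
    have h1 : fT t ((P t).symm y) = y := (P t).right_inv hy
    rwa [hfTeq t (ball_subset_closedBall ht)] at h1
  -- openness of the image
  have hSopen : IsOpen S := by
    rw [Metric.isOpen_iff]
    rintro ⟨y₁, t₁⟩ hq
    obtain ⟨ht₁, hy₁⟩ := (hmemS y₁ t₁).1 hq
    set x₁ := (P t₁).symm y₁ with hx₁def
    have hx₁ : x₁ ∈ ball x₀ r := by rw [← hPsource t₁]; exact (P t₁).map_target hy₁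
    have hfx₁ : f (x₁, t₁) = y₁ := by
      have h1 : fT t₁ x₁ = y₁ := (P t₁).right_inv hy₁
      rwa [hfTeq t₁ (ball_subset_closedBall ht₁)] at h1
    obtain ⟨ε, hεpos, hεsub⟩ : ∃ ε > 0, closedBall x₁ ε ⊆ ball x₀ r :=
      (Metric.nhds_basis_closedBall.mem_iff).1 (isOpen_ball.mem_nhds hx₁)
    set δ : ℝ := ((N : ℝ)⁻¹ - (c : ℝ)) * ε with hδdef
    have hcN' : (c : ℝ) < (N : ℝ)⁻¹ := by
      have := NNReal.coe_lt_coe.2 hcN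
      rwa [NNReal.coe_inv] at this
    have hδpos' : 0 < δ := mul_pos (by linarith) hεpos
    have hcontf : ContinuousAt (fun t => f (x₁, t)) t₁ := by
      have h1 : ContinuousAt f (x₁, t₁) := hf_cont.continuousAt (IsOpen.mem_nhds (hU.prod hV)
        ⟨hUr (ball_subset_closedBall hx₁), hVr (ball_subset_closedBall ht₁)⟩)
      exact h1.comp (Continuous.continuousAt (continuous_const.prodMk continuous_id))
    obtain ⟨ρ, hρpos, hρ⟩ := Metric.continuousAt_iff.1 hcontf (δ / 2) (by linarith)
    have ht₁' : 0 < r - dist t₁ t₀ := by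
      have := mem_ball.1 ht₁; linarith
    refine ⟨min (δ / 2) (min ρ (r - dist t₁ t₀)), by positivity, ?_⟩
    rintro ⟨y, t⟩ hmem
    rw [mem_ball, Prod.dist_eq] at hmem
    have h1 : dist y y₁ < δ / 2 :=
      lt_of_le_of_lt (le_max_left _ _) (lt_of_lt_of_le hmem (min_le_left _ _))
    have h2 : dist t t₁ < ρ := lt_of_le_of_lt (le_max_right _ _)
      (lt_of_lt_of_le hmem ((min_le_right _ _).trans (min_le_left _ _)))
    have h3 : dist t t₁ < r - dist t₁ t₀ := lt_of_le_of_lt (le_max_right _ _)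
      (lt_of_lt_of_le hmem ((min_le_right _ _).trans (min_le_right _ _)))
    have htmem : t ∈ ball t₀ r := by
      rw [mem_ball]
      calc dist t t₀ ≤ dist t t₁ + dist t₁ t₀ := dist_triangle _ _ _
        _ < r := by linarith
    have hyc : y ∈ closedBall (fT t x₁) δ := by
      rw [hfTeq t (ball_subset_closedBall htmem), mem_closedBall]
      have h4 : dist (f (x₁, t)) (f (x₁, t₁)) < δ / 2 := hρ h2
      have h5 : dist y₁ (f (x₁, t)) < δ / 2 := by
        rw [← hfx₁, dist_comm]; exact hρ h2
      calc dist y (f (x₁, t)) ≤ dist y y₁ + dist y₁ (f (x₁, t)) := dist_triangle _ _ _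
        _ ≤ δ := by linarith
    have hsurj := ((happrox t).mono_set hεsub).surjOn_closedBall_of_nonlinearRightInverse
      e.toNonlinearRightInverse (le_of_lt hεpos) (subset_refl _)
    have hyc' := hsurj hyc
    obtain ⟨x, hxmem, hfxy⟩ := hyc'
    rw [hmemS]
    refine ⟨htmem, ?_⟩
    rw [hPtarget]
    exact ⟨x, hεsub hxmem, hfxy⟩
  -- continuity of g on S
  set K : ℝ≥0 := (N⁻¹ - c)⁻¹ with hKdef
  have hanti : ∀ t, ∀ x ∈ ball x₀ r, ∀ x' ∈ ball x₀ r,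
      dist x x' ≤ (K : ℝ) * dist (fT t x) (fT t x') := by
    intro t x hx x' hx'
    have := ((happrox t).antilipschitz hc').le_mul_dist ⟨x, hx⟩ ⟨x', hx'⟩
    exact this
  have hgcont : ContinuousOn g S := by
    rw [Metric.continuousOn_iff]
    rintro ⟨y₁, t₁⟩ hq ε hεpos
    obtain ⟨ht₁, hy₁⟩ := (hmemS y₁ t₁).1 hq
    set x₁ := (P t₁).symm y₁ with hx₁def
    have hx₁ : x₁ ∈ ball x₀ r := by rw [← hPsource t₁]; exact (P t₁).map_target hy₁
    have hfx₁ : f (x₁, t₁) = y₁ := by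
      have h1 : fT t₁ x₁ = y₁ := (P t₁).right_inv hy₁
      rwa [hfTeq t₁ (ball_subset_closedBall ht₁)] at h1
    set M : ℝ := (K : ℝ) + 1 with hMdef
    have hM : 0 < M := by positivity
    have hKM : (K : ℝ) < M := lt_add_one _
    have hcontf : ContinuousAt (fun t => f (x₁, t)) t₁ := by
      have h1 : ContinuousAt f (x₁, t₁) := hf_cont.continuousAt (IsOpen.mem_nhds (hU.prod hV)
        ⟨hUr (ball_subset_closedBall hx₁), hVr (ball_subset_closedBall ht₁)⟩)
      exact h1.comp (Continuous.continuousAt (continuous_const.prodMk continuous_id))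
    obtain ⟨ρ, hρpos, hρ⟩ := Metric.continuousAt_iff.1 hcontf (ε / (2 * M)) (by positivity)
    refine ⟨min (ε / (2 * M)) ρ, by positivity, ?_⟩
    rintro ⟨y, t⟩ hqS hmem
    obtain ⟨ht, hy⟩ := (hmemS y t).1 hqS
    rw [Prod.dist_eq] at hmem
    have h1 : dist y y₁ < ε / (2 * M) :=
      lt_of_le_of_lt (le_max_left _ _) (lt_of_lt_of_le hmem (min_le_left _ _))
    have h2 : dist t t₁ < ρ :=
      lt_of_le_of_lt (le_max_right _ _) (lt_of_lt_of_le hmem (min_le_right _ _))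
    set x := (P t).symm y with hxdef
    have hx : x ∈ ball x₀ r := by rw [← hPsource t]; exact (P t).map_target hy
    have hfx : fT t x = y := (P t).right_inv hy
    show dist ((P t).symm y) ((P t₁).symm y₁) < ε
    have key : dist x x₁ ≤ (K : ℝ) * dist (fT t x) (fT t x₁) := hanti t x hx x₁ hx₁
    rw [hfx] at key
    have h5 : dist (fT t x₁) y₁ < ε / (2 * M) := by
      rw [hfTeq t (ball_subset_closedBall ht), ← hfx₁, dist_comm]
      show dist (f (x₁, t₁)) (f (x₁, t)) < ε / (2 * M)
      rw [dist_comm]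
      exact hρ h2
    have h6 : dist y (fT t x₁) ≤ dist y y₁ + dist (fT t x₁) y₁ := by
      calc dist y (fT t x₁) ≤ dist y y₁ + dist y₁ (fT t x₁) := dist_triangle _ _ _
        _ = dist y y₁ + dist (fT t x₁) y₁ := by rw [dist_comm y₁]
    have h7 : dist x x₁ ≤ (K : ℝ) * (ε / (2 * M) + ε / (2 * M)) := by
      refine key.trans (mul_le_mul_of_nonneg_left ?_ (NNReal.coe_nonneg K))
      linarith
    have h8 : (K : ℝ) * (ε / (2 * M) + ε / (2 * M)) < ε := by
      have h9 : ε / (2 * M) + ε / (2 * M) = ε / M := by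
        rw [← add_div, ← two_mul, mul_div_mul_left _ _ (two_ne_zero)]
      rw [h9]
      have h10 : (K : ℝ) * (ε / M) < M * (ε / M) := by
        apply mul_lt_mul_of_pos_right hKM (by positivity)
      have h11 : M * (ε / M) = ε := by field_simp
      linarith
    exact lt_of_le_of_lt h7 h8
  -- units
  have hcN'' : (c : ℝ) < (N : ℝ)⁻¹ := by
    have := NNReal.coe_lt_coe.2 hcN
    rwa [NNReal.coe_inv] at this
  set eu : (E →L[ℝ] E)ˣ := (ContinuousLinearEquiv.unitsEquiv ℝ E).symm e with heudef
  have heuval : (eu : E →L[ℝ] E) = (e : E →L[ℝ] E) := rfl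
  have heuinv : ((eu⁻¹ : (E →L[ℝ] E)ˣ) : E →L[ℝ] E) = (e.symm : E →L[ℝ] E) := rfl
  have hnear : ∀ t ∈ closedBall t₀ r, ∀ x ∈ closedBall x₀ r,
      ‖fderiv ℝ (fun x' => f (x', t)) x - (eu : E →L[ℝ] E)‖ <
        ‖((eu⁻¹ : (E →L[ℝ] E)ˣ) : E →L[ℝ] E)‖⁻¹ := by
    intro t ht x hx
    rw [heuval, heuinv]
    have h1 : ‖(e.symm : E →L[ℝ] E)‖ = (N : ℝ) := rfl
    rw [h1]
    exact lt_of_le_of_lt (hDfr x hx t ht) hcN''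
  -- the derivative as a unit / equivalence
  have hdf : ∀ t ∈ closedBall t₀ r, ∀ x ∈ ball x₀ r,
      HasFDerivAt (fT t) (fderiv ℝ (fun x' => f (x', t)) x) x := by
    intro t ht x hx
    rw [hfTeq t ht]
    exact (hdiffat t ht x (ball_subset_closedBall hx)).hasFDerivAt
  have hgsmoothAt : ∀ t ∈ ball t₀ r, ∀ y ∈ (P t).target,
      ContDiffAt ℝ (⊤ : ℕ∞) (⇑(P t).symm) y := by
    intro t ht y hy
    have hxs : (P t).symm y ∈ ball x₀ r := by
      rw [← hPsource t]; exact (P t).map_target hy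
    set x := (P t).symm y with hxdef
    set du : (E →L[ℝ] E)ˣ := Units.ofNearby eu (fderiv ℝ (fun x' => f (x', t)) x)
      (hnear t (ball_subset_closedBall ht) x (ball_subset_closedBall hxs)) with hdudef
    set dE : E ≃L[ℝ] E := ContinuousLinearEquiv.unitsEquiv ℝ E du with hdEdef
    have hdEcoe : (dE : E →L[ℝ] E) = fderiv ℝ (fun x' => f (x', t)) x := rfl
    refine (P t).contDiffAt_symm hy (f₀' := dE) ?_ ?_
    · rw [hdEcoe]
      exact hdf t (ball_subset_closedBall ht) x hxs
    · show ContDiffAt ℝ (⊤ : ℕ∞) (fT t) x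
      rw [hfTeq t (ball_subset_closedBall ht)]
      exact (hf_smooth t (hVr (ball_subset_closedBall ht))).contDiffAt
        (hU.mem_nhds (hUr (ball_subset_closedBall hxs)))
  have hG : ∀ t ∈ ball t₀ r, ContDiffOn ℝ (⊤ : ℕ∞) (fun y => g (y, t)) ((P t).target) :=
    fun t ht y hy => (hgsmoothAt t ht y hy).contDiffWithinAt
  have hgderiv : ∀ t ∈ ball t₀ r, ∀ y ∈ (P t).target,
      fderiv ℝ (fun y' => g (y', t)) y =
        Ring.inverse (fderiv ℝ (fun x' => f (x', t)) (g (y, t))) := by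
    intro t ht y hy
    have hxs : (P t).symm y ∈ ball x₀ r := by
      rw [← hPsource t]; exact (P t).map_target hy
    set x := (P t).symm y with hxdef
    set du : (E →L[ℝ] E)ˣ := Units.ofNearby eu (fderiv ℝ (fun x' => f (x', t)) x)
      (hnear t (ball_subset_closedBall ht) x (ball_subset_closedBall hxs)) with hdudef
    set dE : E ≃L[ℝ] E := ContinuousLinearEquiv.unitsEquiv ℝ E du with hdEdef
    have hdEcoe : (dE : E →L[ℝ] E) = fderiv ℝ (fun x' => f (x', t)) x := rfl
    have hder : HasFDerivAt (⇑(P t).symm) ((dE.symm : E →L[ℝ] E)) y := by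
      refine (P t).hasFDerivAt_symm hy ?_
      rw [hdEcoe]
      exact hdf t (ball_subset_closedBall ht) x hxs
    have h2 : fderiv ℝ (fun y' => g (y', t)) y = (dE.symm : E →L[ℝ] E) := hder.fderiv
    rw [h2]
    have h3 : (fderiv ℝ (fun x' => f (x', t)) (g (y, t))) = ((du : (E →L[ℝ] E)ˣ) : E →L[ℝ] E) :=
      rfl
    rw [h3, Ring.inverse_unit]
    rfl
  -- Taylor series of Ring.inverse on the units
  set Ω : Set (E →L[ℝ] E) := {B | IsUnit B} with hΩdef
  have hΩopen : IsOpen Ω := Units.isOpen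
  have hinvsmooth : ContDiffOn ℝ (⊤ : ℕ∞) Ring.inverse Ω := by
    intro B hB
    have h1 := contDiffAt_ringInverse (𝕜 := ℝ) (n := (⊤ : ℕ∞)) hB.unit
    rw [hB.unit_spec] at h1
    exact h1.contDiffWithinAt
  have hQser : HasFTaylorSeriesUpToOn ((⊤ : ℕ∞) : WithTop ℕ∞) Ring.inverse
      (ftaylorSeriesWithin ℝ Ring.inverse Ω) Ω :=
    hinvsmooth.ftaylorSeriesWithin hΩopen.uniqueDiffOn
  have hQcont : ∀ m : ℕ, ContinuousOn (fun B => ftaylorSeriesWithin ℝ Ring.inverse Ω B m) Ω :=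
    fun m => hinvsmooth.continuousOn_iteratedFDerivWithin (by exact_mod_cast le_top) hΩopen.uniqueDiffOn
  -- Taylor series of the vertical derivative of f
  have hDsmooth : ∀ t ∈ V, ContDiffOn ℝ (⊤ : ℕ∞) (fderiv ℝ (fun x => f (x, t))) U := by
    intro t ht
    exact (hf_smooth t ht).fderiv_of_isOpen hU (by simp)
  have hPser : ∀ t ∈ V, HasFTaylorSeriesUpToOn ((⊤ : ℕ∞) : WithTop ℕ∞) (fderiv ℝ (fun x => f (x, t)))
      (ftaylorSeriesWithin ℝ (fderiv ℝ (fun x => f (x, t))) U) U :=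
    fun t ht => (hDsmooth t ht).ftaylorSeriesWithin hU.uniqueDiffOn
  have hPcont : ∀ m : ℕ, ContinuousOn
      (fun p : E × T => iteratedFDerivWithin ℝ m (fderiv ℝ (fun x => f (x, p.2))) U p.1)
      (U ×ˢ V) := by
    intro m
    refine ContinuousOn.congr
      (((continuousMultilinearCurryRightEquiv' ℝ m E E).continuous).comp_continuousOn
        (hf_derivs (m + 1))) ?_
    intro p hp
    show iteratedFDerivWithin ℝ m (fderiv ℝ (fun x => f (x, p.2))) U p.1 =
      (continuousMultilinearCurryRightEquiv' ℝ m E E)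
        (iteratedFDeriv ℝ (m + 1) (fun x => f (x, p.2)) p.1)
    have h1 := iteratedFDeriv_succ_eq_comp_right (𝕜 := ℝ) (n := m)
      (f := fun x => f (x, p.2)) (x := p.1)
    rw [iteratedFDerivWithin_of_isOpen _ hU hp.1, h1]
    simp
  -- slice facts
  have hqS : ∀ q : E × T, q ∈ S → q.2 ∈ ball t₀ r ∧ q.1 ∈ (P q.2).target := by
    rintro ⟨y, t⟩ hq; exact (hmemS y t).1 hq
  have hGm : ContinuousOn (fun q : E × T => ((g q, q.2) : E × T)) S :=
    hgcont.prodMk continuous_snd.continuousOn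
  have hGmaps : MapsTo (fun q : E × T => ((g q, q.2) : E × T)) S (U ×ˢ V) :=
    fun q hq => hAsub (hfg q hq).1
  have hgmemball : ∀ q ∈ S, g q ∈ ball x₀ r := fun q hq => (hfg q hq).1.1
  have hv : ContinuousOn (fun q : E × T => fderiv ℝ (fun x' => f (x', q.2)) (g q)) S :=
    hDfcont.comp hGm hGmaps
  have hvunit : ∀ q ∈ S, IsUnit (fderiv ℝ (fun x' => f (x', q.2)) (g q)) := by
    intro q hq
    exact (Units.ofNearby eu _ (hnear q.2 (ball_subset_closedBall (hqS q hq).1) (g q)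
      (ball_subset_closedBall (hgmemball q hq)))).isUnit
  have hGser : ∀ t ∈ ball t₀ r, HasFTaylorSeriesUpToOn ((⊤ : ℕ∞) : WithTop ℕ∞) (fun y => g (y, t))
      (ftaylorSeriesWithin ℝ (fun y => g (y, t)) ((P t).target)) ((P t).target) :=
    fun t ht => (hG t ht).ftaylorSeriesWithin (P t).open_target.uniqueDiffOn
  -- main induction: joint continuity of all vertical derivatives of g
  have main : ∀ k : ℕ, ContinuousOn
      (fun q : E × T => iteratedFDeriv ℝ k (fun y => g (y, q.2)) q.1) S := by
    intro k
    induction k using Nat.strong_induction_on with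
    | _ k IH =>
      cases k with
      | zero =>
        refine ContinuousOn.congr
          (((continuousMultilinearCurryFin0 ℝ E E).symm.continuous).comp_continuousOn hgcont) ?_
        intro q hq
        show iteratedFDeriv ℝ 0 (fun y => g (y, q.2)) q.1 = _
        ext m
        simp
      | succ k =>
        set Φ : E × T → FormalMultilinearSeries ℝ E (E →L[ℝ] E) := fun q =>
          (ftaylorSeriesWithin ℝ Ring.inverse Ω
            (fderiv ℝ (fun x' => f (x', q.2)) (g q))).taylorComp
            ((ftaylorSeriesWithin ℝ (fderiv ℝ (fun x => f (x, q.2))) U (g q)).taylorComp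
              (ftaylorSeriesWithin ℝ (fun y => g (y, q.2)) ((P q.2).target) q.1)) with hΦdef
        have hΦcont : ContinuousOn (fun q => Φ q k) S := by
          apply continuousOn_taylorComp_aux _ _ k
          · intro m _
            exact ((hQcont m).comp hv (fun q hq => hvunit q hq))
          · intro m hm
            apply continuousOn_taylorComp_aux _ _ m
            · intro m' _
              exact (hPcont m').comp hGm hGmaps
            · intro m' hm'
              refine ContinuousOn.congr
                (IH m' (lt_of_le_of_lt (hm'.trans hm) (Nat.lt_succ_self k))) ?_
              intro q hq
              show iteratedFDerivWithin ℝ m' (fun y => g (y, q.2)) ((P q.2).target) q.1 = _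
              exact iteratedFDerivWithin_of_isOpen _ (P q.2).open_target (hqS q hq).2
        have hkey : ∀ q ∈ S, iteratedFDeriv ℝ (k + 1) (fun y => g (y, q.2)) q.1 =
            (continuousMultilinearCurryRightEquiv' ℝ k E E).symm (Φ q k) := by
          rintro ⟨y, t⟩ hq
          obtain ⟨ht, hy⟩ := hqS (y, t) hq
          have hWopen : IsOpen (P t).target := (P t).open_target
          have hWuniq : UniqueDiffOn ℝ (P t).target := hWopen.uniqueDiffOn
          have hmaps1 : MapsTo (fun y' => g (y', t)) ((P t).target) U := by
            intro y' hy'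
            have hS' : ((y', t) : E × T) ∈ S := (hmemS y' t).2 ⟨ht, hy'⟩
            exact hUr (ball_subset_closedBall (hgmemball _ hS'))
          have hcomp1 := (hPser t (hVr (ball_subset_closedBall ht))).comp (hGser t ht) hmaps1
          have hmaps2 : MapsTo ((fderiv ℝ (fun x => f (x, t))) ∘ (fun y' => g (y', t)))
              ((P t).target) Ω := by
            intro y' hy'
            have hS' : ((y', t) : E × T) ∈ S := (hmemS y' t).2 ⟨ht, hy'⟩
            exact hvunit _ hS'
          have hcomp2 := hQser.comp hcomp1 hmaps2
          have hEq : Set.EqOn (fderivWithin ℝ (fun y' => g (y', t)) ((P t).target))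
              (Ring.inverse ∘ ((fderiv ℝ (fun x => f (x, t))) ∘ (fun y' => g (y', t))))
              ((P t).target) := by
            intro y' hy'
            rw [fderivWithin_of_isOpen hWopen hy']
            exact hgderiv t ht y' hy'
          calc iteratedFDeriv ℝ (k + 1) (fun y' => g (y', t)) y
              = iteratedFDerivWithin ℝ (k + 1) (fun y' => g (y', t)) ((P t).target) y :=
                (iteratedFDerivWithin_of_isOpen _ hWopen hy).symm
            _ = (continuousMultilinearCurryRightEquiv' ℝ k E E).symm
                (iteratedFDerivWithin ℝ k
                  (fderivWithin ℝ (fun y' => g (y', t)) ((P t).target)) ((P t).target) y) := by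
                rw [iteratedFDerivWithin_succ_eq_comp_right hWuniq hy]; rfl
            _ = (continuousMultilinearCurryRightEquiv' ℝ k E E).symm
                (iteratedFDerivWithin ℝ k
                  (Ring.inverse ∘ ((fderiv ℝ (fun x => f (x, t))) ∘ (fun y' => g (y', t))))
                  ((P t).target) y) := by
                rw [iteratedFDerivWithin_congr hEq hy]
            _ = (continuousMultilinearCurryRightEquiv' ℝ k E E).symm (Φ (y, t) k) := by
                congr 1
                exact (hcomp2.eq_iteratedFDerivWithin_of_uniqueDiffOn (by exact_mod_cast le_top) hWuniq hy).symm
        exact ContinuousOn.congr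
          (((continuousMultilinearCurryRightEquiv' ℝ k E E).symm.continuous).comp_continuousOn
            hΦcont) hkey
  -- smoothness of the slices
  have hsmooth_final : ∀ t : T, ContDiffOn ℝ (⊤ : ℕ∞) (fun y => g (y, t)) {y | (y, t) ∈ S} := by
    intro t
    by_cases ht : t ∈ ball t₀ r
    · have hset : {y | (y, t) ∈ S} = (P t).target := by
        ext y; rw [mem_setOf_eq, hmemS y t]; simp [ht]
      rw [hset]
      exact hG t ht
    · intro y hy
      exact absurd ((hmemS y t).1 hy).1 ht
  exact ⟨A, g, hAopen, hAmem, hAsub, hSopen, hgf, hfg, hGm, hsmooth_final, main⟩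

theorem param_ift_aux
    {E T : Type*} [NormedAddCommGroup E] [NormedSpace ℝ E] [CompleteSpace E]
    [NormedAddCommGroup T]
    (U : Set E) (V : Set T) (hU : IsOpen U) (hV : IsOpen V)
    (f : E × T → E)
    (hf_cont : ContinuousOn f (U ×ˢ V))
    (hf_smooth : ∀ t ∈ V, ContDiffOn ℝ (⊤ : ℕ∞) (fun x => f (x, t)) U)
    (hf_derivs : ∀ k : ℕ, ContinuousOn
      (fun p : E × T => iteratedFDeriv ℝ k (fun x => f (x, p.2)) p.1) (U ×ˢ V))
    (x₀ : E) (t₀ : T) (hx₀ : x₀ ∈ U) (ht₀ : t₀ ∈ V)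
    (hinv : ∃ e : E ≃L[ℝ] E, (e : E →L[ℝ] E) = fderiv ℝ (fun x => f (x, t₀)) x₀) :
    ∃ (A : Set (E × T)) (g : E × T → E),
      IsOpen A ∧ (x₀, t₀) ∈ A ∧ A ⊆ U ×ˢ V ∧
      IsOpen ((fun p => (f p, p.2)) '' A) ∧
      (∀ p ∈ A, g (f p, p.2) = p.1) ∧
      (∀ q ∈ (fun p => (f p, p.2)) '' A, (g q, q.2) ∈ A ∧ f (g q, q.2) = q.1) ∧
      ContinuousOn (fun q => ((g q, q.2) : E × T)) ((fun p => (f p, p.2)) '' A) ∧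
      (∀ t : T, ContDiffOn ℝ (⊤ : ℕ∞) (fun y => g (y, t))
        {y | (y, t) ∈ (fun p => (f p, p.2)) '' A}) ∧
      (∀ k : ℕ, ContinuousOn
        (fun q : E × T => iteratedFDeriv ℝ k (fun y => g (y, q.2)) q.1)
        ((fun p => (f p, p.2)) '' A)) := by
  rcases subsingleton_or_nontrivial E with hE | hE
  · -- trivial case
    refine ⟨U ×ˢ V, fun _ => x₀, hU.prod hV, ⟨hx₀, ht₀⟩, le_rfl, ?_, ?_, ?_, ?_, ?_, ?_⟩
    · have : ((fun p : E × T => (f p, p.2)) '' (U ×ˢ V)) = univ ×ˢ V := by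
        ext ⟨y, t⟩
        simp only [mem_image, mem_prod, mem_univ, true_and, Prod.mk.injEq]
        constructor
        · rintro ⟨⟨x, t'⟩, ⟨-, ht'⟩, -, rfl⟩; exact ht'
        · intro ht; exact ⟨(x₀, t), ⟨hx₀, ht⟩, Subsingleton.elim _ _, rfl⟩
      rw [this]; exact isOpen_univ.prod hV
    · intro p _; exact Subsingleton.elim _ _
    · rintro ⟨y, t⟩ ⟨⟨x, t'⟩, ⟨hx, ht'⟩, h⟩
      obtain ⟨h1, h2⟩ := Prod.mk.injEq .. ▸ h
      refine ⟨⟨hx₀, h2 ▸ ht'⟩, Subsingleton.elim _ _⟩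
    · exact (continuous_const.prodMk continuous_snd).continuousOn
    · intro t; exact contDiffOn_const
    · intro k
      exact ((contDiff_const (c := x₀)).continuous_iteratedFDeriv le_top).comp
        continuous_fst |>.continuousOn
  · exact param_ift_aux_nontrivial U V hU hV f hE hf_cont hf_smooth hf_derivs x₀ t₀ hx₀ ht₀ hinv

/-- **Inverse function theorem with continuous parameters** (the `m = 0` case of the
parametrized inverse function theorem).  Here `F (x, t) = (f (x, t), t)`. -/
theorem inverse_function_theorem_with_parameters
    (n l : ℕ) (U : Set (Fin n → ℝ)) (V : Set (Fin l → ℝ))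
    (hU : IsOpen U) (hV : IsOpen V)
    (f : (Fin n → ℝ) × (Fin l → ℝ) → (Fin n → ℝ))
    (hf_cont : ContinuousOn f (U ×ˢ V))
    (hf_smooth : ∀ t ∈ V, ContDiffOn ℝ (⊤ : ℕ∞) (fun x => f (x, t)) U)
    (hf_derivs : ∀ k : ℕ, ContinuousOn
      (fun p : (Fin n → ℝ) × (Fin l → ℝ) =>
        iteratedFDeriv ℝ k (fun x => f (x, p.2)) p.1) (U ×ˢ V))
    (x₀ : Fin n → ℝ) (t₀ : Fin l → ℝ) (hx₀ : x₀ ∈ U) (ht₀ : t₀ ∈ V)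
    (hinv : ∃ e : (Fin n → ℝ) ≃L[ℝ] (Fin n → ℝ),
      (e : (Fin n → ℝ) →L[ℝ] (Fin n → ℝ)) = fderiv ℝ (fun x => f (x, t₀)) x₀) :
    ∃ (A : Set ((Fin n → ℝ) × (Fin l → ℝ)))
      (g : (Fin n → ℝ) × (Fin l → ℝ) → (Fin n → ℝ)),
      IsOpen A ∧ (x₀, t₀) ∈ A ∧ A ⊆ U ×ˢ V ∧
      IsOpen ((fun p => (f p, p.2)) '' A) ∧
      -- `(y, t) ↦ (g (y, t), t)` is a two-sided inverse of `F` between `A` and `F(A)`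
      (∀ p ∈ A, g (f p, p.2) = p.1) ∧
      (∀ q ∈ (fun p => (f p, p.2)) '' A,
        (g q, q.2) ∈ A ∧ f (g q, q.2) = q.1) ∧
      -- `F` restricts to a homeomorphism from `A` onto `F(A)` :
      ContinuousOn (fun q => ((g q, q.2) : (Fin n → ℝ) × (Fin l → ℝ)))
        ((fun p => (f p, p.2)) '' A) ∧
      -- for each fixed `t`, `y ↦ g (y, t)` is `C^∞`
      (∀ t : Fin l → ℝ, ContDiffOn ℝ (⊤ : ℕ∞) (fun y => g (y, t))
        {y | (y, t) ∈ (fun p => (f p, p.2)) '' A}) ∧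
      -- `g` and all its vertical iterated derivatives are continuous in `(y, t)`
      (∀ k : ℕ, ContinuousOn
        (fun q : (Fin n → ℝ) × (Fin l → ℝ) =>
          iteratedFDeriv ℝ k (fun y => g (y, q.2)) q.1)
        ((fun p => (f p, p.2)) '' A)) :=
  param_ift_aux U V hU hV f hf_cont hf_smooth hf_derivs x₀ t₀ hx₀ ht₀ hinv
end

section
/- Let m be a natural number or ∞, let h, l be natural numbers, and let f : (Fin h → ℂ) × (Fin l → ℝ) → ℂ be a function that is C^m (over ℝ, viewing ℂ and ℂʰ as real normed spaces) and such that for every fixed t ∈ ℝˡ the map z ↦ f(z,t) is holomorphic on ℂʰ (differentiable over ℂ). Then for every index i : Fin h, the partial derivative (z,t) ↦ (fderiv ℂ (fun w => f(w,t)) z) (Pi.single i 1) is again C^m jointly in (z,t) and, for each fixed t, holomorphic in z. (Consequently, by iteration, all partial derivatives of f of any order with respect to the complex variables z₁,…,z_h are C^m functions of (z,t).) -/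
open MeasureTheory intervalIntegral Metric Set Complex Real

section param
universe u
variable {E : Type u} [NormedAddCommGroup E] [NormedSpace ℝ E] [FiniteDimensional ℝ E] {a b : ℝ}

/-- If `G` is `C^n` jointly, then the parametric interval integral `x ↦ ∫ θ in a..b, G (x, θ)`
is `C^n` (natural number case, proved by induction on `n`). -/
theorem contDiff_parametric_nat (n : ℕ) :
    ∀ {F : Type u} [NormedAddCommGroup F] [NormedSpace ℝ F] [CompleteSpace F]
      (G : E × ℝ → F), ContDiff ℝ n G → ContDiff ℝ n (fun x : E => ∫ θ in a..b, G (x, θ)) := by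
  induction n with
  | zero =>
    intro F _ _ _ G hG
    have : Continuous G := hG.continuous
    exact contDiff_zero.2
      (intervalIntegral.continuous_parametric_intervalIntegral_of_continuous'
        (f := fun (x : E) (θ : ℝ) => G (x, θ)) this a b)
  | succ n IH =>
    intro F _ _ _ G hG
    have h1n : (1 : WithTop ℕ∞) ≤ (n + 1 : ℕ) := by
      exact_mod_cast Nat.one_le_iff_ne_zero.2 (Nat.succ_ne_zero n)
    set Φ : E × ℝ → E →L[ℝ] F := fun q => (fderiv ℝ G q).comp (ContinuousLinearMap.inl ℝ E ℝ)
      with hΦdef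
    have hΦ : ContDiff ℝ n Φ := by
      have h1 : ContDiff ℝ n (fderiv ℝ G) :=
        hG.fderiv_right (by exact_mod_cast le_refl (n + 1 : ℕ))
      exact (((ContinuousLinearMap.compL ℝ E (E × ℝ) F).flip
        (ContinuousLinearMap.inl ℝ E ℝ)).contDiff).comp h1
    have hΦcont : Continuous Φ := hΦ.continuous
    have hslice : ∀ (x : E) (θ : ℝ), HasFDerivAt (fun y : E => G (y, θ)) (Φ (x, θ)) x := by
      intro x θ
      have hG' : HasFDerivAt G (fderiv ℝ G (x, θ)) (x, θ) :=
        ((hG.differentiable (by exact_mod_cast Nat.succ_ne_zero n)) (x, θ)).hasFDerivAt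
      exact hG'.comp x ((hasFDerivAt_id x).prodMk (hasFDerivAt_const θ x))
    haveI : SecondCountableTopologyEither ℝ (E →L[ℝ] F) :=
      secondCountableTopologyEither_of_left ℝ _
    have key : ∀ x₀ : E, HasFDerivAt (fun x : E => ∫ θ in a..b, G (x, θ))
        (∫ θ in a..b, Φ (x₀, θ)) x₀ := by
      intro x₀
      obtain ⟨M, hM⟩ : ∃ M, ∀ q ∈ (closedBall x₀ 1) ×ˢ (uIcc a b), ‖Φ q‖ ≤ M :=
        ((isCompact_closedBall x₀ 1).prod isCompact_uIcc).exists_bound_of_continuousOn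
          hΦcont.continuousOn
      apply intervalIntegral.hasFDerivAt_integral_of_dominated_of_fderiv_le
        (F := fun (x : E) (θ : ℝ) => G (x, θ)) (F' := fun (x : E) (θ : ℝ) => Φ (x, θ))
        (bound := fun _ => M) (ball_mem_nhds x₀ one_pos)
      · exact Filter.Eventually.of_forall fun x =>
          (hG.continuous.comp (Continuous.prodMk_right x)).aestronglyMeasurable
      · exact (hG.continuous.comp (Continuous.prodMk_right x₀)).intervalIntegrable a b
      · exact (hΦcont.comp (Continuous.prodMk_right x₀)).aestronglyMeasurable
      · refine ae_of_all _ fun θ hθ x hx => hM (x, θ) ?_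
        exact ⟨ball_subset_closedBall hx, uIoc_subset_uIcc hθ⟩
      · exact intervalIntegrable_const
      · exact ae_of_all _ fun θ _ x _ => hslice x θ
    rw [show ((n + 1 : ℕ) : WithTop ℕ∞) = (n : WithTop ℕ∞) + 1 by exact_mod_cast rfl,
      contDiff_succ_iff_hasFDerivAt]
    exact ⟨fun x => ∫ θ in a..b, Φ (x, θ), IH Φ hΦ, key⟩

/-- If `G` is `C^m` jointly, then the parametric interval integral is `C^m`. -/
theorem contDiff_parametric (m : ℕ∞) {F : Type u} [NormedAddCommGroup F] [NormedSpace ℝ F]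
    [CompleteSpace F] (G : E × ℝ → F) (hG : ContDiff ℝ m G) :
    ContDiff ℝ m (fun x : E => ∫ θ in a..b, G (x, θ)) := by
  rw [contDiff_iff_forall_nat_le]
  intro k hk
  exact contDiff_parametric_nat k G (contDiff_iff_forall_nat_le.1 hG k hk)

end param

/-- The Cauchy kernel on the unit circle. -/
noncomputable def Kc : ℝ → ℂ := fun θ => circleMap 0 1 θ * I * ((circleMap 0 1 θ) ^ 2)⁻¹

theorem contDiff_circleMap01 : ContDiff ℝ ((⊤ : ℕ∞) : WithTop ℕ∞) (circleMap 0 1) := by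
  have : circleMap 0 1 = fun θ : ℝ => Complex.exp (θ * I) := by
    funext θ; simp [circleMap]
  rw [this]
  exact Complex.contDiff_exp.comp ((Complex.ofRealCLM.contDiff).mul contDiff_const)

theorem contDiff_Kc : ContDiff ℝ ((⊤ : ℕ∞) : WithTop ℕ∞) Kc :=
  (contDiff_circleMap01.mul contDiff_const).mul
    ((contDiff_circleMap01.pow 2).inv fun _ => pow_ne_zero 2 (circleMap_ne_center one_ne_zero))

theorem norm_Kc_le (θ : ℝ) : ‖Kc θ‖ ≤ 1 := by
  have h1 : ‖circleMap 0 1 θ‖ = 1 := by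
    simp [norm_circleMap_zero]
  simp [Kc, norm_mul, norm_inv, norm_pow, h1]

section cauchy
variable {E : Type*} [NormedAddCommGroup E] [NormedSpace ℂ E]

theorem hasDerivAt_slice {s : E → ℂ} (hs : Differentiable ℂ s) (z : E) (v : E) :
    HasDerivAt (fun u : ℂ => s (z + u • v)) (fderiv ℂ s z v) 0 := by
  have h1 : HasDerivAt (fun u : ℂ => z + u • v) v 0 := by
    simpa using ((hasDerivAt_id (0 : ℂ)).smul_const v).const_add z
  have h2 : HasFDerivAt s (fderiv ℂ s z) (z + (0 : ℂ) • v) := by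
    simpa using (hs z).hasFDerivAt
  simpa [Function.comp_def] using h2.comp_hasDerivAt (0 : ℂ) h1

/-- Cauchy estimate: a bound for a holomorphic function on a closed unit ball around `z` gives
the same bound for the norm of its Fréchet derivative at `z`. -/
theorem norm_fderiv_le_of_bound {s : E → ℂ} (hs : Differentiable ℂ s) {z : E} {M : ℝ}
    (hM : ∀ w ∈ closedBall z 1, ‖s w‖ ≤ M) : ‖fderiv ℂ s z‖ ≤ M := by
  have hM0 : 0 ≤ M := le_trans (norm_nonneg _) (hM z (mem_closedBall_self zero_le_one))
  refine ContinuousLinearMap.opNorm_le_bound _ hM0 fun v => ?_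
  rcases eq_or_ne v 0 with rfl | hv
  · simp [hM0]
  · have hψ : Differentiable ℂ (fun u : ℂ => s (z + u • v)) :=
      hs.comp ((differentiable_id.smul_const v).const_add z)
    have hR : (0 : ℝ) < ‖v‖⁻¹ := inv_pos.2 (norm_pos_iff.2 hv)
    have hb : ∀ u ∈ sphere (0 : ℂ) ‖v‖⁻¹, ‖s (z + u • v)‖ ≤ M := by
      intro u hu
      apply hM
      rw [mem_sphere_zero_iff_norm] at hu
      simp only [mem_closedBall, dist_eq_norm, add_sub_cancel_left, norm_smul, hu]
      rw [inv_mul_cancel₀ (norm_ne_zero_iff.2 hv)]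
    have := Complex.norm_deriv_le_of_forall_mem_sphere_norm_le hR hψ.diffContOnCl hb
    rw [(hasDerivAt_slice hs z v).deriv] at this
    calc ‖fderiv ℂ s z v‖ ≤ M / ‖v‖⁻¹ := this
      _ = M * ‖v‖ := by field_simp

/-- Cauchy integral representation of the derivative of a holomorphic function. -/
theorem fderiv_apply_eq_integral {s : E → ℂ} (hs : Differentiable ℂ s) (z : E) (v : E) :
    fderiv ℂ s z v = (2 * π * I : ℂ)⁻¹ • ∫ θ in (0:ℝ)..2 * π,
      Kc θ • s (z + circleMap 0 1 θ • v) := by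
  have hψ : Differentiable ℂ (fun u : ℂ => s (z + u • v)) :=
    hs.comp ((differentiable_id.smul_const v).const_add z)
  have hC : deriv (fun u : ℂ => s (z + u • v)) 0 = (2 * π * I : ℂ)⁻¹ •
      circleIntegral (fun u => ((u - 0) ^ 2)⁻¹ • s (z + u • v)) 0 1 := by
    rw [eq_inv_smul_iff₀ Complex.two_pi_I_ne_zero,
      ← hψ.diffContOnCl.deriv_eq_smul_circleIntegral one_pos]
    simp only [one_div]
  rw [← (hasDerivAt_slice hs z v).deriv,
    hC]
  congr 1
  rw [circleIntegral]
  refine intervalIntegral.integral_congr fun θ _ => ?_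
  rw [deriv_circleMap, sub_zero, smul_smul, Kc]

end cauchy

section diffint
variable {E : Type*} [NormedAddCommGroup E] [NormedSpace ℂ E] [FiniteDimensional ℂ E]
  [MeasurableSpace E] [BorelSpace E]

/-- Holomorphy of the parametric Cauchy-type integral. -/
theorem differentiable_integral_slice {s : E → ℂ} (hs : Differentiable ℂ s) {e : E}
    (he : ‖e‖ ≤ 1) :
    Differentiable ℂ (fun z : E => ∫ θ in (0:ℝ)..2 * π,
      Kc θ • s (z + circleMap 0 1 θ • e)) := by
  intro z₀
  obtain ⟨M₀, hM₀⟩ : ∃ M₀, ∀ w ∈ closedBall z₀ 4, ‖s w‖ ≤ M₀ :=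
    (isCompact_closedBall z₀ 4).exists_bound_of_continuousOn hs.continuous.continuousOn
  have hMd : ∀ w ∈ closedBall z₀ 3, ‖fderiv ℂ s w‖ ≤ M₀ := by
    intro w hw
    refine norm_fderiv_le_of_bound hs fun u hu => hM₀ u ?_
    rw [mem_closedBall] at *
    calc dist u z₀ ≤ dist u w + dist w z₀ := dist_triangle _ _ _
      _ ≤ 1 + 3 := add_le_add hu hw
      _ ≤ 4 := by norm_num
  have hKc : Continuous Kc := contDiff_Kc.continuous
  have hsc : Continuous s := hs.continuous
  have hmem : ∀ z ∈ ball z₀ 1, ∀ θ : ℝ, z + circleMap 0 1 θ • e ∈ closedBall z₀ 3 := by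
    intro z hz θ
    rw [mem_closedBall, dist_eq_norm]
    have h1 : ‖circleMap 0 1 θ • e‖ ≤ 1 := by
      rw [norm_smul]
      have : ‖circleMap 0 1 θ‖ = 1 := by simp [norm_circleMap_zero]
      rw [this, one_mul]; exact he
    calc ‖z + circleMap 0 1 θ • e - z₀‖ = ‖(z - z₀) + circleMap 0 1 θ • e‖ := by
          rw [add_sub_right_comm]
      _ ≤ ‖z - z₀‖ + ‖circleMap 0 1 θ • e‖ := norm_add_le _ _
      _ ≤ 1 + 1 := add_le_add (le_of_lt (mem_ball_iff_norm.1 hz)) h1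
      _ ≤ 3 := by norm_num
  have hasF : ∀ (θ : ℝ), ∀ z : E, HasFDerivAt (fun y : E => Kc θ • s (y + circleMap 0 1 θ • e))
      (Kc θ • fderiv ℂ s (z + circleMap 0 1 θ • e)) z := by
    intro θ z
    have h1 : HasFDerivAt (fun y : E => s (y + circleMap 0 1 θ • e))
        (fderiv ℂ s (z + circleMap 0 1 θ • e)) z := by
      have := ((hs (z + circleMap 0 1 θ • e)).hasFDerivAt).comp z
        ((hasFDerivAt_id z).add_const (circleMap 0 1 θ • e))
      simpa [Function.comp_def] using this
    exact h1.const_smul (Kc θ)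
  have cF : ∀ z : E, Continuous fun θ : ℝ => Kc θ • s (z + circleMap 0 1 θ • e) := by
    intro z
    exact hKc.smul (hsc.comp (continuous_const.add ((continuous_circleMap 0 1).smul
      continuous_const)))
  have := intervalIntegral.hasFDerivAt_integral_of_dominated_loc_of_lip
    (𝕜 := ℂ) (μ := volume) (a := 0) (b := 2 * π)
    (F := fun (z : E) (θ : ℝ) => Kc θ • s (z + circleMap 0 1 θ • e))
    (F' := fun θ : ℝ => Kc θ • fderiv ℂ s (z₀ + circleMap 0 1 θ • e))
    (x₀ := z₀) (bound := fun _ => M₀) (ball_mem_nhds z₀ one_pos)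
    (Filter.Eventually.of_forall fun z => (cF z).aestronglyMeasurable)
    ((cF z₀).intervalIntegrable 0 (2 * π))
    ?_ ?_ intervalIntegrable_const ?_
  · exact this.2.differentiableAt
  · have m1 : Measurable fun θ : ℝ => fderiv ℂ s (z₀ + circleMap 0 1 θ • e) :=
      (measurable_fderiv ℂ s).comp
        (continuous_const.add ((continuous_circleMap 0 1).smul continuous_const)).measurable
    exact (hKc.measurable.smul m1).aestronglyMeasurable
  · refine ae_of_all _ fun θ _ => ?_
    refine (convex_ball z₀ 1).lipschitzOnWith_of_nnnorm_hasFDerivWithin_le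
      (f' := fun z : E => Kc θ • fderiv ℂ s (z + circleMap 0 1 θ • e))
      (fun z hz => (hasF θ z).hasFDerivWithinAt) fun z hz => ?_
    rw [← NNReal.coe_le_coe, coe_nnnorm, Real.coe_nnabs]
    calc ‖Kc θ • fderiv ℂ s (z + circleMap 0 1 θ • e)‖
        = ‖Kc θ‖ * ‖fderiv ℂ s (z + circleMap 0 1 θ • e)‖ := norm_smul _ _
      _ ≤ 1 * M₀ := mul_le_mul (norm_Kc_le θ) (hMd _ (hmem z hz θ)) (norm_nonneg _)
          zero_le_one
      _ = M₀ := one_mul _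
      _ ≤ |M₀| := le_abs_self _
  · exact ae_of_all _ fun θ _ => hasF θ z₀

end diffint

/-- A `C^m` function of complex variables `z = (z₁, …, z_h)` and real parameters
`t = (t₁, …, t_l)` which is holomorphic in `z` has all of its partial derivatives with
respect to the complex variables again of class `C^m` jointly in `(z, t)` and holomorphic
in `z` (hence, by iteration, all `z`-partials of any order are `C^m`). -/
theorem contDiff_holomorphic_partial_deriv
    (m : ℕ∞) (h l : ℕ)
    (f : (Fin h → ℂ) × (Fin l → ℝ) → ℂ)
    (hf : ContDiff ℝ m f)
    (hhol : ∀ t : Fin l → ℝ, Differentiable ℂ (fun z : Fin h → ℂ => f (z, t)))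
    (i : Fin h) :
    ContDiff ℝ m (fun p : (Fin h → ℂ) × (Fin l → ℝ) =>
        (fderiv ℂ (fun w : Fin h → ℂ => f (w, p.2)) p.1) (Pi.single i 1)) ∧
    ∀ t : Fin l → ℝ, Differentiable ℂ (fun z : Fin h → ℂ =>
        (fderiv ℂ (fun w : Fin h → ℂ => f (w, t)) z) (Pi.single i 1)) := by
  set e : Fin h → ℂ := Pi.single i 1 with he_def
  have he : ‖e‖ ≤ 1 := by rw [he_def, Pi.norm_single]; simp
  have key : ∀ (z : Fin h → ℂ) (t : Fin l → ℝ),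
      fderiv ℂ (fun w : Fin h → ℂ => f (w, t)) z e = (2 * π * I : ℂ)⁻¹ •
        ∫ θ in (0:ℝ)..2 * π, Kc θ • f (z + circleMap 0 1 θ • e, t) :=
    fun z t => fderiv_apply_eq_integral (hhol t) z e
  have hmle : ((m : WithTop ℕ∞)) ≤ (((⊤ : ℕ∞) : WithTop ℕ∞)) := by exact_mod_cast le_top
  constructor
  · -- joint smoothness
    have hφ : ContDiff ℝ m (fun q : ((Fin h → ℂ) × (Fin l → ℝ)) × ℝ =>
        ((q.1.1 + circleMap 0 1 q.2 • e, q.1.2) : (Fin h → ℂ) × (Fin l → ℝ))) := by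
      have hsm : ContDiff ℝ m (fun c : ℂ => c • e) :=
        (((ContinuousLinearMap.id ℂ ℂ).smulRight e).restrictScalars ℝ).contDiff
      refine ContDiff.prodMk ?_ (contDiff_snd.comp contDiff_fst)
      exact (contDiff_fst.comp contDiff_fst).add
        (hsm.comp (((contDiff_circleMap01.of_le hmle)).comp contDiff_snd))
    have hG : ContDiff ℝ m (fun q : ((Fin h → ℂ) × (Fin l → ℝ)) × ℝ =>
        Kc q.2 • f (q.1.1 + circleMap 0 1 q.2 • e, q.1.2)) := by
      simp only [smul_eq_mul]
      exact ((contDiff_Kc.of_le hmle).comp contDiff_snd).mul (hf.comp hφ)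
    have hint := contDiff_parametric (a := (0:ℝ)) (b := 2 * π) m _ hG
    have heq : (fun p : (Fin h → ℂ) × (Fin l → ℝ) =>
        (fderiv ℂ (fun w : Fin h → ℂ => f (w, p.2)) p.1) e) =
        fun p : (Fin h → ℂ) × (Fin l → ℝ) => (2 * π * I : ℂ)⁻¹ •
          ∫ θ in (0:ℝ)..2 * π, Kc θ • f (p.1 + circleMap 0 1 θ • e, p.2) :=
      funext fun p => key p.1 p.2
    rw [heq]
    exact hint.const_smul _
  · -- holomorphy in z
    intro t
    have heq : (fun z : Fin h → ℂ =>
        (fderiv ℂ (fun w : Fin h → ℂ => f (w, t)) z) e) =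
        fun z : Fin h → ℂ => (2 * π * I : ℂ)⁻¹ •
          ∫ θ in (0:ℝ)..2 * π, Kc θ • f (z + circleMap 0 1 θ • e, t) :=
      funext fun z => key z t
    rw [heq]
    exact (differentiable_integral_slice (hhol t) he).fun_const_smul _
end

section
/- Invariance of the Beltrami coefficient modulus under inversion (pointwise form of Lemma 5.4, first part): Let F : ℂ → ℂ be real-differentiable at a point p with |∂F/∂z̄ (p)| < |∂F/∂z (p)|, and let G : ℂ → ℂ be real-differentiable at F(p) with G(F(x)) = x for all x in some neighborhood of p. Then ∂G/∂z (F(p)) ≠ 0 and |∂G/∂z̄ (F(p))| / |∂G/∂z (F(p))| = |∂F/∂z̄ (p)| / |∂F/∂z (p)|. -/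
/-- The Wirtinger derivative `∂f/∂z` at `z`. -/
noncomputable def wirtingerDZ (f : ℂ → ℂ) (z : ℂ) : ℂ :=
  ((fderiv ℝ f z) 1 - Complex.I * (fderiv ℝ f z) Complex.I) / 2

/-- The conjugate Wirtinger derivative `∂f/∂z̄` at `z`. -/
noncomputable def wirtingerDZBar (f : ℂ → ℂ) (z : ℂ) : ℂ :=
  ((fderiv ℝ f z) 1 + Complex.I * (fderiv ℝ f z) Complex.I) / 2

open Complex in
lemma clm_repr (L : ℂ →L[ℝ] ℂ) (w : ℂ) :
    L w = ((L 1 - I * L I) / 2) * w + ((L 1 + I * L I) / 2) * (starRingEnd ℂ) w := by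
  have hw : w = w.re • (1 : ℂ) + w.im • (I : ℂ) := by
    simp [Complex.real_smul]
  have hw' : (w.re : ℂ) + w.im * I = w := Complex.re_add_im w
  have hc : (starRingEnd ℂ) w = (w.re : ℂ) - w.im * I := by
    simp [Complex.ext_iff]
  nth_rewrite 1 [hw]
  rw [map_add, map_smul, map_smul, hc, ← hw']
  simp only [Complex.real_smul]
  rw [hw']
  linear_combination ((L 1 - I * L I) / 2) * hw' + (w.im : ℂ) * L I * Complex.I_sq

/-- **Invariance of the Beltrami coefficient modulus under inversion**: if `G` is a local
inverse of `F` near `p`, then `|μ_G (F p)| = |μ_F (p)|`, where `μ_F = (∂F/∂z̄)/(∂F/∂z)`. -/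
theorem beltrami_coefficient_modulus_inverse
    (F G : ℂ → ℂ) (p : ℂ)
    (hF : DifferentiableAt ℝ F p)
    (hlt : ‖wirtingerDZBar F p‖ < ‖wirtingerDZ F p‖)
    (hG : DifferentiableAt ℝ G (F p))
    (hinv : ∀ᶠ x in nhds p, G (F x) = x) :
    wirtingerDZ G (F p) ≠ 0 ∧
    ‖wirtingerDZBar G (F p)‖ / ‖wirtingerDZ G (F p)‖
      = ‖wirtingerDZBar F p‖ / ‖wirtingerDZ F p‖ := by
  set D := fderiv ℝ F p with hD
  set E := fderiv ℝ G (F p) with hE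
  set a := wirtingerDZ F p with ha
  set b := wirtingerDZBar F p with hb
  set a' := wirtingerDZ G (F p) with ha'
  set b' := wirtingerDZBar G (F p) with hb'
  have hchain : ∀ w : ℂ, E (D w) = w := by
    have h1 : (G ∘ F) =ᶠ[nhds p] id := hinv
    have h2 : fderiv ℝ (G ∘ F) p = fderiv ℝ (id : ℂ → ℂ) p := h1.fderiv_eq
    rw [fderiv_id] at h2
    have h3 : fderiv ℝ (G ∘ F) p = E.comp D := fderiv_comp p hG hF
    intro w
    have := congrArg (fun (L : ℂ →L[ℝ] ℂ) => L w) (h3.symm.trans h2)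
    simpa using this
  have hD1 : D 1 = a + b := by rw [ha, hb, wirtingerDZ, wirtingerDZBar, ← hD]; ring
  have hDI : D Complex.I = Complex.I * (a - b) := by
    rw [ha, hb, wirtingerDZ, wirtingerDZBar, ← hD]
    linear_combination (D Complex.I) * Complex.I_sq
  have hEw : ∀ w : ℂ, E w = a' * w + b' * (starRingEnd ℂ) w := by
    intro w
    rw [ha', hb', wirtingerDZ, wirtingerDZBar, ← hE]
    exact clm_repr E w
  have e1 : a' * (a + b) + b' * ((starRingEnd ℂ) a + (starRingEnd ℂ) b) = 1 := by
    have := hchain 1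
    rw [hD1, hEw] at this
    simpa [map_add] using this
  have e2 : a' * (Complex.I * (a - b))
      + b' * (-Complex.I * ((starRingEnd ℂ) a - (starRingEnd ℂ) b)) = Complex.I := by
    have := hchain Complex.I
    rw [hDI, hEw] at this
    simpa [map_mul, map_sub, Complex.conj_I] using this
  have h2' : a' * (a - b) - b' * ((starRingEnd ℂ) a - (starRingEnd ℂ) b) = 1 := by
    have h := congrArg (fun z => -Complex.I * z) e2
    linear_combination h + (a' * (a - b) - b' * ((starRingEnd ℂ) a - (starRingEnd ℂ) b) - 1) * Complex.I_sq
  have key1 : a' * a + b' * (starRingEnd ℂ) b = 1 := by linear_combination (e1 + h2') / 2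
  have key2 : a' * b + b' * (starRingEnd ℂ) a = 0 := by linear_combination (e1 - h2') / 2
  have hane : a ≠ 0 := by
    intro h
    rw [h] at hlt
    simp at hlt
    exact (norm_nonneg b).not_gt hlt
  have hane' : (starRingEnd ℂ) a ≠ 0 := by simpa using hane
  have ha'ne : a' ≠ 0 := by
    intro h
    rw [h] at key1 key2
    simp at key1 key2
    rcases key2 with h1 | h1
    · rw [h1] at key1; simp at key1
    · exact hane h1
  refine ⟨ha'ne, ?_⟩
  have hbc : b' * (starRingEnd ℂ) a = -(a' * b) := by linear_combination key2
  have habs : ‖b'‖ * ‖a‖ = ‖a'‖ * ‖b‖ := by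
    have := congrArg (fun z : ℂ => ‖z‖) hbc
    simpa [norm_mul, norm_neg] using this
  have h0a : ‖a‖ ≠ 0 := by simpa using hane
  have h0a' : ‖a'‖ ≠ 0 := by simpa using ha'ne
  field_simp
  linarith [mul_comm (‖b'‖) (‖a‖)]
end

section
/- The Teichmüller coordinate chart at a zero of even order is continuous and injective: Let k be a real number with 0 ≤ k < 1 and let n be a natural number with n ≥ 1. Define η : ℂ → ℂ by η(0) = 0 and, for z ≠ 0, η(z) = z · exp( (1/n) · Log( (1 + k · (conj(z)/z)ⁿ) / (1 − k) ) ), where Log is the principal branch of the complex logarithm (well defined here, since Re(1 + k·(conj(z)/z)ⁿ) ≥ 1 − k > 0). Then η is continuous on ℂ, injective on ℂ, and satisfies η(z)ⁿ = (zⁿ + k · conj(z)ⁿ)/(1 − k) for all z ∈ ℂ. -/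
/-- **The Teichmüller coordinate chart at a zero of even order is continuous and
injective**: for `0 ≤ k < 1` and `n ≥ 1`, the map `η` given by `η 0 = 0` and
`η z = z · exp((1/n) · Log((1 + k (z̄/z)ⁿ)/(1 − k)))` for `z ≠ 0` is continuous,
injective, and satisfies `η(z)ⁿ = (zⁿ + k z̄ⁿ)/(1 − k)`. -/
theorem teichmuller_chart_even_order
    (k : ℝ) (hk0 : 0 ≤ k) (hk1 : k < 1) (n : ℕ) (hn : 1 ≤ n)
    (η : ℂ → ℂ)
    (hη0 : η 0 = 0)
    (hηz : ∀ z : ℂ, z ≠ 0 →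
      η z = z * Complex.exp ((1 / (n : ℂ)) *
        Complex.log ((1 + (k : ℂ) * ((starRingEnd ℂ) z / z) ^ n) / (1 - (k : ℂ))))) :
    Continuous η ∧ Function.Injective η ∧
    ∀ z : ℂ, η z ^ n = (z ^ n + (k : ℂ) * (starRingEnd ℂ) z ^ n) / (1 - (k : ℂ)) := by
  have hk1' : (0:ℝ) < 1 - k := by linarith
  have hcast : (1 : ℂ) - (k:ℂ) = ((1 - k : ℝ) : ℂ) := by push_cast; ring
  have hkC : (1 : ℂ) - (k:ℂ) ≠ 0 := by
    rw [hcast]; exact_mod_cast hk1'.ne'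
  have hnR : (0:ℝ) < n := by exact_mod_cast hn
  have hnC : (n : ℂ) ≠ 0 := by exact_mod_cast hnR.ne'
  set u : ℂ → ℂ := fun z => (1 + (k : ℂ) * ((starRingEnd ℂ) z / z) ^ n) / (1 - (k : ℂ))
    with hu_def
  -- basic bounds on u
  have habs_w : ∀ z : ℂ, z ≠ 0 → ‖(starRingEnd ℂ) z / z‖ = 1 := by
    intro z hz
    rw [norm_div, Complex.norm_conj, div_self]
    exact (norm_ne_zero_iff.mpr hz)
  have habs_kwn : ∀ z : ℂ, z ≠ 0 →
      ‖(k : ℂ) * ((starRingEnd ℂ) z / z) ^ n‖ = k := by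
    intro z hz
    rw [norm_mul, norm_pow, habs_w z hz, one_pow, mul_one, Complex.norm_real, Real.norm_eq_abs,
      abs_of_nonneg hk0]
  have hre_num : ∀ z : ℂ, z ≠ 0 →
      1 - k ≤ (1 + (k : ℂ) * ((starRingEnd ℂ) z / z) ^ n).re := by
    intro z hz
    have h1 : (1 + (k : ℂ) * ((starRingEnd ℂ) z / z) ^ n).re
        = 1 + ((k : ℂ) * ((starRingEnd ℂ) z / z) ^ n).re := by simp
    rw [h1]
    have := Complex.abs_re_le_norm ((k : ℂ) * ((starRingEnd ℂ) z / z) ^ n)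
    rw [habs_kwn z hz] at this
    have := abs_le.mp this
    linarith [this.1]
  have hre_u : ∀ z : ℂ, z ≠ 0 → 0 < (u z).re := by
    intro z hz
    have : (u z).re = (1 + (k : ℂ) * ((starRingEnd ℂ) z / z) ^ n).re / (1 - k) := by
      rw [hu_def]; simp only; rw [hcast, Complex.div_ofReal_re]
    rw [this]
    exact div_pos (lt_of_lt_of_le hk1' (hre_num z hz)) hk1'
  have hu_ne : ∀ z : ℂ, z ≠ 0 → u z ≠ 0 := by
    intro z hz h
    have := hre_u z hz
    rw [h] at this; simp at this
  have hu_slit : ∀ z : ℂ, z ≠ 0 → u z ∈ Complex.slitPlane := by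
    intro z hz
    exact Or.inl (hre_u z hz)
  have habs_u : ∀ z : ℂ, z ≠ 0 → ‖u z‖ ≤ (1 + k) / (1 - k) := by
    intro z hz
    rw [hu_def]; simp only
    rw [norm_div, hcast, Complex.norm_real, Real.norm_eq_abs, abs_of_nonneg hk1'.le]
    gcongr
    calc ‖1 + (k : ℂ) * ((starRingEnd ℂ) z / z) ^ n‖
          ≤ ‖(1:ℂ)‖ + ‖(k : ℂ) * ((starRingEnd ℂ) z / z) ^ n‖ :=
            norm_add_le _ _
        _ = 1 + k := by rw [norm_one, habs_kwn z hz]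
  -- the power identity
  have hpow : ∀ z : ℂ, η z ^ n =
      (z ^ n + (k : ℂ) * (starRingEnd ℂ) z ^ n) / (1 - (k : ℂ)) := by
    intro z
    rcases eq_or_ne z 0 with rfl | hz
    · rw [hη0, zero_pow (by omega), map_zero, zero_pow (by omega)]
      simp
    · rw [hηz z hz, mul_pow, ← Complex.exp_nat_mul]
      have h1 : (n : ℂ) * ((1 / (n : ℂ)) * Complex.log (u z)) = Complex.log (u z) := by
        field_simp
      rw [h1, Complex.exp_log (hu_ne z hz), hu_def]
      simp only
      have hzn : z ^ n ≠ 0 := pow_ne_zero n hz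
      field_simp
      rw [div_pow]
      field_simp
  refine ⟨?_, ?_, hpow⟩
  · -- continuity
    rw [continuous_iff_continuousAt]
    intro z₀
    rcases eq_or_ne z₀ 0 with rfl | hz₀
    · -- continuity at 0 via a linear bound
      have C := Real.exp ((1 / n) * Real.log ((1 + k) / (1 - k)))
      have hbound : ∀ z : ℂ, ‖η z‖ ≤
          Real.exp ((1 / n) * Real.log ((1 + k) / (1 - k))) * ‖z‖ := by
        intro z
        rcases eq_or_ne z 0 with rfl | hz
        · simp [hη0]
        · rw [hηz z hz, norm_mul, mul_comm]
          apply mul_le_mul_of_nonneg_right _ (norm_nonneg z)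
          rw [Complex.norm_exp]
          apply Real.exp_le_exp.mpr
          have h1 : ((1 / (n : ℂ)) * Complex.log (u z)).re
              = (1 / n) * (Complex.log (u z)).re := by
            have : (1 / (n : ℂ)) = ((1 / n : ℝ) : ℂ) := by push_cast; ring
            rw [this, Complex.re_ofReal_mul]
          rw [h1, Complex.log_re]
          apply mul_le_mul_of_nonneg_left _ (by positivity)
          exact Real.log_le_log (norm_pos_iff.mpr (hu_ne z hz)) (habs_u z hz)
      have : ContinuousAt η 0 ↔ Filter.Tendsto η (nhds 0) (nhds 0) := by
        rw [ContinuousAt, hη0]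
      rw [this]
      apply squeeze_zero_norm hbound
      have : Filter.Tendsto (fun z : ℂ =>
          Real.exp ((1 / n) * Real.log ((1 + k) / (1 - k))) * ‖z‖)
          (nhds 0) (nhds (Real.exp ((1 / n) * Real.log ((1 + k) / (1 - k))) * ‖(0:ℂ)‖)) := by
        exact (tendsto_const_nhds.mul (continuous_norm.tendsto 0))
      simpa using this
    · -- continuity away from 0
      have hcu : ContinuousAt u z₀ := by
        apply ContinuousAt.div _ continuousAt_const hkC
        apply ContinuousAt.add continuousAt_const
        apply ContinuousAt.mul continuousAt_const
        apply ContinuousAt.pow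
        exact (Complex.continuous_conj.continuousAt).div continuousAt_id hz₀
      have hc : ContinuousAt (fun z => z * Complex.exp ((1 / (n : ℂ)) * Complex.log (u z))) z₀ := by
        apply continuousAt_id.mul
        apply Complex.continuous_exp.continuousAt.comp
        exact continuousAt_const.mul (hcu.clog (hu_slit z₀ hz₀))
      apply hc.congr
      filter_upwards [isOpen_ne.mem_nhds hz₀] with z hz
      exact (hηz z hz).symm
  · -- injectivity
    intro a b hab
    have hzero : ∀ z : ℂ, η z = 0 → z = 0 := by
      intro z hz
      by_contra h
      rw [hηz z h] at hz
      exact (mul_ne_zero h (Complex.exp_ne_zero _)) hz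
    rcases eq_or_ne a 0 with rfl | ha
    · exact (hzero b (hab ▸ hη0)).symm
    rcases eq_or_ne b 0 with rfl | hb
    · exact absurd (hzero a (hη0 ▸ hab)) ha
    -- both nonzero: first aⁿ = bⁿ
    have hpq : a ^ n + (k : ℂ) * (starRingEnd ℂ) a ^ n
        = b ^ n + (k : ℂ) * (starRingEnd ℂ) b ^ n := by
      have := hpow a
      rw [hab, hpow b] at this
      have h2 := congrArg (fun x => x * (1 - (k:ℂ))) this
      simpa [div_mul_cancel₀ _ hkC] using h2.symm
    have hn_eq : a ^ n = b ^ n := by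
      have h1 : a ^ n - b ^ n = -(k : ℂ) * (starRingEnd ℂ) (a ^ n - b ^ n) := by
        rw [map_sub, map_pow, map_pow]
        linear_combination hpq
      have h2 : ‖a ^ n - b ^ n‖ = k * ‖a ^ n - b ^ n‖ := by
        calc ‖a ^ n - b ^ n‖
            = ‖-(k:ℂ) * (starRingEnd ℂ) (a ^ n - b ^ n)‖ := by rw [← h1]
          _ = ‖-(k:ℂ)‖ * ‖(starRingEnd ℂ) (a ^ n - b ^ n)‖ :=
              norm_mul _ _
          _ = k * ‖a ^ n - b ^ n‖ := by
              rw [Complex.norm_conj]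
              congr 1
              rw [show (-(k:ℂ)) = ((-k:ℝ):ℂ) by push_cast; ring, Complex.norm_real, Real.norm_eq_abs,
                abs_neg, abs_of_nonneg hk0]
      by_contra h
      have habs0 : 0 < ‖a ^ n - b ^ n‖ := by
        rw [norm_pos_iff]; exact sub_ne_zero.mpr h
      nlinarith
    -- then the exponential factors agree
    have hwn : ((starRingEnd ℂ) a / a) ^ n = ((starRingEnd ℂ) b / b) ^ n := by
      rw [div_pow, div_pow, ← map_pow, ← map_pow, hn_eq]
    have : a * Complex.exp ((1 / (n : ℂ)) * Complex.log (u b))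
        = b * Complex.exp ((1 / (n : ℂ)) * Complex.log (u b)) := by
      have ha' := hηz a ha
      have hb' := hηz b hb
      rw [ha', hb'] at hab
      rw [hu_def]; simp only
      rw [← hwn] at hab ⊢
      exact hab
    exact mul_right_cancel₀ (Complex.exp_ne_zero _) this
end

section
/- Holomorphic solutions of the perturbed equation coincide with holomorphic functions (smooth case of the local uniqueness lemma): Let U be an open neighborhood of the origin in ℂ and ν : U → ℂ a C^∞ function with |ν(z)| < 1 for all z ∈ U. Let w : U → ℂ be a C^∞ function satisfying ∂w/∂z̄ (z) = ν(z) · ∂w/∂z (z) and ∂w/∂z (z) ≠ 0 for all z ∈ U. Then a real-differentiable function f : U → ℂ satisfies ∂f/∂z̄ = ν · ∂f/∂z on a neighborhood of a point z₀ ∈ U if and only if f is locally at z₀ of the form h ∘ w with h holomorphic on a neighborhood of w(z₀). -/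
open Complex

lemma clm_decomp (D : ℂ →L[ℝ] ℂ) (v : ℂ) :
    D v = ((D 1 - I * D I) / 2) * v + ((D 1 + I * D I) / 2) * (starRingEnd ℂ) v := by
  have hv : v = (v.re : ℝ) • (1 : ℂ) + (v.im : ℝ) • I := by
    simp [Complex.real_smul, Complex.re_add_im]
  have hc : (starRingEnd ℂ) v = (v.re : ℂ) - (v.im : ℂ) * I := by
    simp [Complex.ext_iff]
  conv_lhs => rw [hv]
  rw [map_add, map_smul, map_smul, hc]
  nth_rewrite 3 [hv]
  rw [Complex.real_smul, Complex.real_smul, Complex.real_smul, Complex.real_smul]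
  ring_nf
  simp [Complex.I_sq]

lemma fderiv_wirtinger (f : ℂ → ℂ) (z v : ℂ) :
    fderiv ℝ f z v = wirtingerDZ f z * v + wirtingerDZBar f z * (starRingEnd ℂ) v :=
  clm_decomp (fderiv ℝ f z) v

lemma holo_of_dzbar_zero {f : ℂ → ℂ} {z : ℂ} (hf : DifferentiableAt ℝ f z)
    (h0 : wirtingerDZBar f z = 0) : DifferentiableAt ℂ f z := by
  rw [differentiableAt_iff_restrictScalars ℝ hf]
  refine ⟨wirtingerDZ f z • ContinuousLinearMap.id ℂ ℂ, ?_⟩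
  ext v
  rw [ContinuousLinearMap.coe_restrictScalars']
  simp only [ContinuousLinearMap.smul_apply, ContinuousLinearMap.id_apply, smul_eq_mul]
  rw [fderiv_wirtinger f z v, h0]
  ring

lemma dzbar_of_holo {f : ℂ → ℂ} {z : ℂ} (hf : DifferentiableAt ℂ f z) :
    wirtingerDZBar f z = 0 := by
  have hD : fderiv ℝ f z = (fderiv ℂ f z).restrictScalars ℝ :=
    (hf.hasFDerivAt.restrictScalars ℝ).fderiv
  have hI : fderiv ℂ f z Complex.I = Complex.I * fderiv ℂ f z 1 := by
    rw [show (Complex.I : ℂ) = Complex.I • (1 : ℂ) by simp, map_smul]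
    simp [smul_eq_mul]
  simp only [wirtingerDZBar, hD, ContinuousLinearMap.coe_restrictScalars', hI]
  field_simp
  linear_combination (fderiv ℂ f z 1) * Complex.I_mul_I

lemma dz_of_holo {f : ℂ → ℂ} {z : ℂ} (hf : DifferentiableAt ℂ f z) :
    wirtingerDZ f z = deriv f z := by
  have hD : fderiv ℝ f z = (fderiv ℂ f z).restrictScalars ℝ :=
    (hf.hasFDerivAt.restrictScalars ℝ).fderiv
  have hI : fderiv ℂ f z Complex.I = Complex.I * fderiv ℂ f z 1 := by
    rw [show (Complex.I : ℂ) = Complex.I • (1 : ℂ) by simp, map_smul]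
    simp [smul_eq_mul]
  simp only [wirtingerDZ, hD, ContinuousLinearMap.coe_restrictScalars', hI, fderiv_apply_one_eq_deriv]
  field_simp
  linear_combination (-(deriv f z)) * Complex.I_mul_I

lemma wirtinger_comp_dzbar {g w : ℂ → ℂ} {z : ℂ}
    (hg : DifferentiableAt ℝ g (w z)) (hw : DifferentiableAt ℝ w z) :
    wirtingerDZBar (g ∘ w) z =
      wirtingerDZ g (w z) * wirtingerDZBar w z
        + wirtingerDZBar g (w z) * (starRingEnd ℂ) (wirtingerDZ w z) := by
  have hD : fderiv ℝ (g ∘ w) z = (fderiv ℝ g (w z)).comp (fderiv ℝ w z) :=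
    fderiv_comp z hg hw
  rw [wirtingerDZBar, hD]
  simp only [ContinuousLinearMap.comp_apply, fderiv_wirtinger w z,
    fderiv_wirtinger g (w z)]
  simp only [map_add, map_mul, Complex.conj_conj, Complex.conj_I, map_one, mul_one, map_neg]
  linear_combination ((wirtingerDZ g (w z) * (wirtingerDZ w z - wirtingerDZBar w z) + wirtingerDZBar g (w z) * ((starRingEnd ℂ) (wirtingerDZBar w z) - (starRingEnd ℂ) (wirtingerDZ w z)))/2) * Complex.I_mul_I

lemma wirtinger_comp_dz {g w : ℂ → ℂ} {z : ℂ}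
    (hg : DifferentiableAt ℝ g (w z)) (hw : DifferentiableAt ℝ w z) :
    wirtingerDZ (g ∘ w) z =
      wirtingerDZ g (w z) * wirtingerDZ w z
        + wirtingerDZBar g (w z) * (starRingEnd ℂ) (wirtingerDZBar w z) := by
  have hD : fderiv ℝ (g ∘ w) z = (fderiv ℝ g (w z)).comp (fderiv ℝ w z) :=
    fderiv_comp z hg hw
  rw [wirtingerDZ, hD]
  simp only [ContinuousLinearMap.comp_apply, fderiv_wirtinger w z,
    fderiv_wirtinger g (w z)]
  simp only [map_add, map_mul, Complex.conj_conj, Complex.conj_I, map_one, mul_one, map_neg]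
  linear_combination (-(wirtingerDZ g (w z) * (wirtingerDZ w z - wirtingerDZBar w z) + wirtingerDZBar g (w z) * ((starRingEnd ℂ) (wirtingerDZBar w z) - (starRingEnd ℂ) (wirtingerDZ w z)))/2) * Complex.I_mul_I

/-- **Holomorphic solutions of the perturbed equation coincide with holomorphic
functions of a fixed nondegenerate solution `w`** (smooth case of the local uniqueness
lemma): a real-differentiable `f` solves `∂f/∂z̄ = ν ∂f/∂z` near `z₀` iff `f` is
locally of the form `h ∘ w` with `h` holomorphic near `w z₀`. -/
theorem beltrami_solutions_eq_holomorphic_of_w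
    (U : Set ℂ) (hU : IsOpen U) (hU0 : (0 : ℂ) ∈ U)
    (ν : ℂ → ℂ) (hν : ContDiffOn ℝ (⊤ : ℕ∞) ν U)
    (hbound : ∀ z ∈ U, ‖ν z‖ < 1)
    (w : ℂ → ℂ) (hw : ContDiffOn ℝ (⊤ : ℕ∞) w U)
    (hw_belt : ∀ z ∈ U, wirtingerDZBar w z = ν z * wirtingerDZ w z)
    (hw_nz : ∀ z ∈ U, wirtingerDZ w z ≠ 0)
    (f : ℂ → ℂ) (hf : ∀ z ∈ U, DifferentiableAt ℝ f z)
    (z₀ : ℂ) (hz₀ : z₀ ∈ U) :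
    (∀ᶠ z in nhds z₀, wirtingerDZBar f z = ν z * wirtingerDZ f z)
      ↔ ∃ (h : ℂ → ℂ) (W : Set ℂ), IsOpen W ∧ w z₀ ∈ W ∧
          DifferentiableOn ℂ h W ∧ ∀ᶠ z in nhds z₀, f z = h (w z) := by
  have hwdiffOn : DifferentiableOn ℝ w U := hw.differentiableOn (by simp)
  constructor
  · intro hEq
    -- the real derivative of `w` at `z₀` is invertible
    set D := fderiv ℝ w z₀ with hDdef
    have hker : ∀ v : ℂ, D v = 0 → v = 0 := by
      intro v hv
      rw [hDdef, fderiv_wirtinger, hw_belt z₀ hz₀] at hv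
      have hfac : wirtingerDZ w z₀ * (v + ν z₀ * (starRingEnd ℂ) v) = 0 := by
        linear_combination hv
      have h2 : v + ν z₀ * (starRingEnd ℂ) v = 0 :=
        (mul_eq_zero.mp hfac).resolve_left (hw_nz z₀ hz₀)
      have habs : ‖v‖ = ‖ν z₀‖ * ‖v‖ := by
        have hv' : v = -(ν z₀ * (starRingEnd ℂ) v) := by linear_combination h2
        conv_lhs => rw [hv']
        rw [norm_neg, norm_mul, Complex.norm_conj]
      by_contra hvne
      have hpos : 0 < ‖v‖ := by
        simpa using hvne
      nlinarith [hbound z₀ hz₀]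
    have hinj : Function.Injective D := by
      intro a b hab
      have : D (a - b) = 0 := by rw [map_sub, hab, sub_self]
      exact sub_eq_zero.mp (hker _ this)
    -- upgrade `D` to a continuous linear equivalence
    let L : ℂ ≃ₗ[ℝ] ℂ := LinearEquiv.ofInjectiveEndo (D : ℂ →ₗ[ℝ] ℂ) hinj
    let E : ℂ ≃L[ℝ] ℂ := L.toContinuousLinearEquiv
    have hE : (E : ℂ →L[ℝ] ℂ) = D := by
      ext v
      rfl
    have hwc : ContDiffAt ℝ (⊤ : ℕ∞) w z₀ := hw.contDiffAt (hU.mem_nhds hz₀)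
    have hfd : HasFDerivAt w (E : ℂ →L[ℝ] ℂ) z₀ := by
      rw [hE]
      exact (hwdiffOn.differentiableAt (hU.mem_nhds hz₀)).hasFDerivAt
    set g := hwc.localInverse hfd (by simp) with hgdef
    have hS : HasStrictFDerivAt w (E : ℂ →L[ℝ] ℂ) z₀ := hwc.hasStrictFDerivAt' hfd (by simp)
    have hg_left : ∀ᶠ z in nhds z₀, g (w z) = z := hS.eventually_left_inverse
    have hg_right : ∀ᶠ ζ in nhds (w z₀), w (g ζ) = ζ := hS.eventually_right_inverse
    have hg_cd : ContDiffAt ℝ (⊤ : ℕ∞) g (w z₀) := hwc.to_localInverse hfd (by simp)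
    have hgz₀ : g (w z₀) = z₀ := hwc.localInverse_apply_image hfd (by simp)
    have htend : Filter.Tendsto g (nhds (w z₀)) (nhds z₀) := by
      have := hg_cd.continuousAt.tendsto
      rwa [hgz₀] at this
    have hevg1 : ∀ᶠ ζ in nhds (w z₀), ContDiffAt ℝ 1 g ζ :=
      (hg_cd.of_le (by simp)).eventually (by simp)
    have hevU : ∀ᶠ ζ in nhds (w z₀), g ζ ∈ U := htend (hU.mem_nhds hz₀)
    have hevf : ∀ᶠ ζ in nhds (w z₀),
        wirtingerDZBar f (g ζ) = ν (g ζ) * wirtingerDZ f (g ζ) := htend.eventually hEq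
    have hev : ∀ᶠ ζ in nhds (w z₀), w (g ζ) = ζ ∧ ContDiffAt ℝ 1 g ζ ∧ g ζ ∈ U ∧
        wirtingerDZBar f (g ζ) = ν (g ζ) * wirtingerDZ f (g ζ) :=
      hg_right.and (hevg1.and (hevU.and hevf))
    obtain ⟨W, hWp, hWopen, hWmem⟩ := eventually_nhds_iff.mp hev
    refine ⟨f ∘ g, W, hWopen, hWmem, ?_, ?_⟩
    · intro ζ hζ
      obtain ⟨hwg, hgC, hgU, hfEq⟩ := hWp ζ hζ
      have hgz : DifferentiableAt ℝ g ζ := hgC.differentiableAt one_ne_zero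
      have hwdiff : DifferentiableAt ℝ w (g ζ) := hwdiffOn.differentiableAt (hU.mem_nhds hgU)
      have hfdiff : DifferentiableAt ℝ f (g ζ) := hf _ hgU
      have hevid : (w ∘ g) =ᶠ[nhds ζ] id := by
        filter_upwards [hWopen.mem_nhds hζ] with x hx
        exact (hWp x hx).1
      have hfdid : fderiv ℝ (w ∘ g) ζ = ContinuousLinearMap.id ℝ ℂ := by
        rw [hevid.fderiv_eq, fderiv_id]
      have hbar0 : wirtingerDZBar (w ∘ g) ζ = 0 := by
        rw [wirtingerDZBar, hfdid]
        simp only [ContinuousLinearMap.id_apply]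
        rw [Complex.I_mul_I]
        ring
      have hchain := wirtinger_comp_dzbar (g := w) (w := g) hwdiff hgz
      rw [hbar0, hw_belt _ hgU] at hchain
      have key : wirtingerDZBar g ζ = -(ν (g ζ)) * (starRingEnd ℂ) (wirtingerDZ g ζ) := by
        have hfac : wirtingerDZ w (g ζ) *
            (wirtingerDZBar g ζ + ν (g ζ) * (starRingEnd ℂ) (wirtingerDZ g ζ)) = 0 := by
          linear_combination -hchain
        have := (mul_eq_zero.mp hfac).resolve_left (hw_nz _ hgU)
        linear_combination this
      have hcomp := wirtinger_comp_dzbar (g := f) (w := g) hfdiff hgz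
      rw [key, hfEq] at hcomp
      have hzero : wirtingerDZBar (f ∘ g) ζ = 0 := by
        rw [hcomp]; ring
      exact (holo_of_dzbar_zero (hfdiff.comp ζ hgz) hzero).differentiableWithinAt
    · filter_upwards [hg_left] with z hz
      simp only [Function.comp_apply, hz]
  · rintro ⟨h, W, hWopen, hWmem, hh, hfe⟩
    have hwcont : ContinuousAt w z₀ := (hw.continuousOn.continuousAt (hU.mem_nhds hz₀))
    have hWev : ∀ᶠ z in nhds z₀, w z ∈ W := hwcont (hWopen.mem_nhds hWmem)
    have hUev : ∀ᶠ z in nhds z₀, z ∈ U := hU.mem_nhds hz₀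
    have hfe' : ∀ᶠ z in nhds z₀, ∀ᶠ x in nhds z, f x = h (w x) := hfe.eventually_nhds
    filter_upwards [hWev, hUev, hfe'] with z hzW hzU hzf
    have hD : fderiv ℝ f z = fderiv ℝ (fun x => h (w x)) z :=
      Filter.EventuallyEq.fderiv_eq hzf
    have hhz : DifferentiableAt ℂ h (w z) := hh.differentiableAt (hWopen.mem_nhds hzW)
    have hwd : DifferentiableAt ℝ w z := hwdiffOn.differentiableAt (hU.mem_nhds hzU)
    have hbz : wirtingerDZBar f z = wirtingerDZBar (h ∘ w) z := by
      rw [wirtingerDZBar, wirtingerDZBar, hD]; rfl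
    have hdz : wirtingerDZ f z = wirtingerDZ (h ∘ w) z := by
      rw [wirtingerDZ, wirtingerDZ, hD]; rfl
    rw [hbz, hdz, wirtinger_comp_dzbar (hhz.restrictScalars ℝ) hwd,
      wirtinger_comp_dz (hhz.restrictScalars ℝ) hwd, dzbar_of_holo hhz, hw_belt z hzU]
    ring
end
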